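/- For every integer n > 0, every h ∈ ℂ^× with C := diag(h, h^{−1}), and every D ∈ SL_2(ℂ), the subalgebras B̄_{−n}(C) and ι^*B̄(D) of the ℂ-algebra of functions on Ξ are distinct. In particular, for nonzero shift the classical Bethe subalgebra of O(W_{−n}) is not the pullback under the shift homomorphism ι_{0,0,−n} of any classical Bethe subalgebra of O(W_0) = O(SL_2[[z^{−1}]]_1). -/

import Mathlib

noncomputable section

/-- `Ξ = 𝔪 × (1 + 𝔪) × 𝔪`, parametrized by triples `(Q, x, P)` of power series in
`t = z^{-1}` with `Q(0) = 0`, `x(0) = 1`, `P(0) = 0`. -/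
abbrev Xi : Type :=
  {ξ : PowerSeries ℂ × PowerSeries ℂ × PowerSeries ℂ //
    PowerSeries.coeff (R := ℂ) 0 ξ.1 = 0 ∧ PowerSeries.coeff (R := ℂ) 0 ξ.2.1 = 1 ∧
      PowerSeries.coeff (R := ℂ) 0 ξ.2.2 = 0}

/-- The inclusion `ℂ[[z^{-1}]] ⊆ ℂ((z^{-1}))`. -/
def toL (f : PowerSeries ℂ) : LaurentSeries ℂ := HahnSeries.ofPowerSeries ℤ ℂ f

/-- The parametrization `g(ξ)` of `W_{-n} ⊂ SL_2(ℂ((z^{-1})))`: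
`g(Q,x,P) = [[1,Q],[0,1]]·[[x,0],[0,x⁻¹]]·[[z^{-n},0],[0,z^{n}]]·[[1,0],[P,1]]`
(with `z^{-n} = t^n`, `z^n = t^{-n}` in the variable `t = z^{-1}`). -/
def gMat (n : ℕ) (ξ : Xi) : Matrix (Fin 2) (Fin 2) (LaurentSeries ℂ) :=
  !![1, toL ξ.1.1; 0, 1] * !![toL ξ.1.2.1, 0; 0, (toL ξ.1.2.1)⁻¹] *
    !![HahnSeries.single (n : ℤ) 1, 0; 0, HahnSeries.single (-(n : ℤ)) 1] *
    !![1, 0; toL ξ.1.2.2, 1]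

/-- `P' = ∑_{k ≥ 1} P_{k+2n} z^{-k}`. -/
def shiftP (n : ℕ) (P : PowerSeries ℂ) : PowerSeries ℂ :=
  PowerSeries.mk fun k => if k = 0 then 0 else PowerSeries.coeff (R := ℂ) (k + 2 * n) P

/-- The shift homomorphism `ι_{0,0,-n} : W_{-n} → SL_2[[z^{-1}]]_1` in the coordinates
`(Q,x,P)`: `ι(Q,x,P) = [[1,Q],[0,1]]·[[x,0],[0,x⁻¹]]·[[1,0],[P',1]]`. -/
def iotaMat (n : ℕ) (ξ : Xi) : Matrix (Fin 2) (Fin 2) (LaurentSeries ℂ) :=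
  !![1, toL ξ.1.1; 0, 1] * !![toL ξ.1.2.1, 0; 0, (toL ξ.1.2.1)⁻¹] *
    !![1, 0; toL (shiftP n ξ.1.2.2), 1]

/-- `θ_D^{(r)}(h)`: the coefficient of `z^{-r}` in `tr(D·h)`. -/
def theta (D : Matrix (Fin 2) (Fin 2) ℂ) (r : ℤ)
    (h : Matrix (Fin 2) (Fin 2) (LaurentSeries ℂ)) : ℂ :=
  (Matrix.trace (D.map (algebraMap ℂ (LaurentSeries ℂ)) * h)).coeff r


def xiC (c : ℂ) : Xi := ⟨(PowerSeries.X, 1, c • PowerSeries.X), by simp⟩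

lemma shiftP_smulX (n : ℕ) (hn : 0 < n) (c : ℂ) : shiftP n (c • PowerSeries.X) = 0 := by
  ext k
  simp only [shiftP, PowerSeries.coeff_mk, map_zero, PowerSeries.coeff_smul,
    PowerSeries.coeff_X, smul_eq_mul]
  split
  · rfl
  · rename_i hk
    rw [if_neg (by omega), mul_zero]

lemma toL_one : toL 1 = 1 := map_one _
lemma toL_zero : toL 0 = 0 := map_zero _
lemma toL_X : toL PowerSeries.X = HahnSeries.single 1 1 := HahnSeries.ofPowerSeries_X
lemma toL_smulX (c : ℂ) : toL (c • PowerSeries.X) = HahnSeries.single 1 c := by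
  have : (c • PowerSeries.X : PowerSeries ℂ) = PowerSeries.C c * PowerSeries.X := by
    simp [PowerSeries.smul_eq_C_mul]
  rw [this, toL, map_mul, HahnSeries.ofPowerSeries_C, HahnSeries.ofPowerSeries_X,
    HahnSeries.C_apply, HahnSeries.single_mul_single, zero_add, mul_one]

lemma iotaMat_xiC (n : ℕ) (hn : 0 < n) (c : ℂ) :
    iotaMat n (xiC c) = !![1, toL PowerSeries.X; 0, 1] := by
  simp [iotaMat, xiC, shiftP_smulX n hn, toL_one, toL_zero, Matrix.mul_fin_two]

lemma gMat_xiC (n : ℕ) (c : ℂ) :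
    gMat n (xiC c) = !![HahnSeries.single (n : ℤ) 1
        + HahnSeries.single ((2 : ℤ) - n) c, HahnSeries.single (1 - (n : ℤ)) 1;
      HahnSeries.single (1 - (n : ℤ)) c, HahnSeries.single (-(n : ℤ)) 1] := by
  simp [gMat, xiC, toL_one, toL_X, toL_smulX, Matrix.mul_fin_two,
    HahnSeries.single_mul_single]
  have e1 : (1 : ℤ) + -(n:ℤ) + 1 = 2 - n := by ring
  have e2 : (1 : ℤ) + -(n:ℤ) = 1 - n := by ring
  have e3 : (-(n:ℤ)) + 1 = 1 - n := by ring
  rw [e1, e2, e3]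
  exact ⟨⟨rfl, rfl⟩, rfl⟩

lemma aM (x : ℂ) : algebraMap ℂ (LaurentSeries ℂ) x = HahnSeries.single 0 x := by
  rw [HahnSeries.algebraMap_apply', PowerSeries.algebraMap_apply]
  simp [HahnSeries.ofPowerSeries_C, HahnSeries.C_apply]

lemma theta_gMat (n : ℕ) (h c : ℂ) :
    theta !![h, 0; 0, h⁻¹] (2 - n) (gMat n (xiC c)) =
      h * c + (if ((2 : ℤ) - n = n) then h else 0) := by
  rw [gMat_xiC]
  simp only [theta, Matrix.trace_fin_two, Matrix.mul_apply, Fin.sum_univ_two,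
    Matrix.map_apply, Matrix.cons_val', Matrix.cons_val_zero, Matrix.cons_val_one,
    Matrix.head_cons, Matrix.empty_val', Matrix.cons_val_fin_one, Matrix.head_fin_const,
    aM, HahnSeries.coeff_single, map_zero, zero_mul, mul_zero, add_zero, zero_add,
    mul_add, HahnSeries.single_mul_single, HahnSeries.coeff_add, mul_one]
  simp only [Matrix.of_apply, Matrix.cons_val', Matrix.cons_val_zero, Matrix.cons_val_one,
    Matrix.head_cons, Matrix.empty_val', Matrix.cons_val_fin_one, Matrix.head_fin_const,
    HahnSeries.single_mul_single, mul_add, HahnSeries.coeff_add, HahnSeries.coeff_single,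
    mul_zero, mul_one, zero_add, add_zero]
  have h1 : ¬((2:ℤ) - n = -n) := by omega
  simp only [if_true, zero_mul, ite_self, if_neg h1, add_zero, zero_add, if_pos trivial]
  ring_nf

/-- for every `n > 0`, `h ∈ ℂˣ` with `C = diag(h, h⁻¹)`, and every
`D ∈ SL_2(ℂ)`, the classical Bethe subalgebra `B̄_{-n}(C)` of functions on `Ξ` is
distinct from the pullback `ι^* B̄(D)` of the classical Bethe subalgebra of
`O(SL_2[[z^{-1}]]_1)`. -/
theorem statement18 (n : ℕ) (hn : 0 < n) (h : ℂ) (hh : h ≠ 0)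
    (D : Matrix (Fin 2) (Fin 2) ℂ) (hD : D.det = 1) :
    Algebra.adjoin ℂ
        {f : Xi → ℂ | ∃ r : ℤ, f = fun ξ => theta !![h, 0; 0, h⁻¹] r (gMat n ξ)} ≠
      Algebra.adjoin ℂ
        {f : Xi → ℂ | ∃ r : ℤ, f = fun ξ => theta D r (iotaMat n ξ)} := by
  intro hEq
  have hmem : (fun ξ => theta !![h, 0; 0, h⁻¹] (2 - n) (gMat n ξ)) ∈
      Algebra.adjoin ℂ
        {f : Xi → ℂ | ∃ r : ℤ, f = fun ξ => theta !![h, 0; 0, h⁻¹] r (gMat n ξ)} :=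
    Algebra.subset_adjoin ⟨2 - n, rfl⟩
  rw [hEq] at hmem
  set φ0 : (Xi → ℂ) →ₐ[ℂ] ℂ := Pi.evalAlgHom ℂ (fun _ => ℂ) (xiC 0) with hφ0
  set φ1 : (Xi → ℂ) →ₐ[ℂ] ℂ := Pi.evalAlgHom ℂ (fun _ => ℂ) (xiC 1) with hφ1
  have hsub : {f : Xi → ℂ | ∃ r : ℤ, f = fun ξ => theta D r (iotaMat n ξ)} ⊆
      ↑(AlgHom.equalizer φ0 φ1) := by
    rintro f ⟨r, rfl⟩
    show theta D r (iotaMat n (xiC 0)) = theta D r (iotaMat n (xiC 1))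
    rw [iotaMat_xiC n hn, iotaMat_xiC n hn]
  have key : theta !![h, 0; 0, h⁻¹] (2 - n) (gMat n (xiC 0)) =
      theta !![h, 0; 0, h⁻¹] (2 - n) (gMat n (xiC 1)) :=
    Algebra.adjoin_le hsub hmem
  rw [theta_gMat, theta_gMat] at key
  exact hh (by linear_combination -key)
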